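/- arXiv:math/0612584 — 2 statements merged into one kernel-verified Lean document; each statement's English description precedes it below -/
import Mathlib

section
/- If $\lambda, \mu$ are partitions in the same orbit of the type $D_n$ Weyl group $W$ under the dot action with parameter $\delta$, then the multiset of contents of boxes in $\lambda/(\lambda\cap\mu)$ and the multiset of contents of boxes in $\mu/(\lambda\cap\mu)$ are disjoint, and within each skew shape the boxes can be paired so that each pair of contents sums to $1-\delta$. -/
open Finset

namespace BrauerD

/-- The standard inner product on `ℚ^n`. -/
def inner (n : ℕ) (x y : Fin n → ℚ) : ℚ := ∑ i, x i * y i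

/-- The standard basis vector `ε_i`. -/
def eps (n : ℕ) (i : Fin n) : Fin n → ℚ := fun j => if j = i then 1 else 0

/-- The reflection `s_β(x) = x - (x,β)β`. -/
def refl (n : ℕ) (β : Fin n → ℚ) : Function.End (Fin n → ℚ) :=
  fun x => x - inner n x β • β

/-- The affine reflection `s_{β,c}(x) = x - ((x,β) - c)β`. -/
def saff (n : ℕ) (β : Fin n → ℚ) (c : ℚ) : Function.End (Fin n → ℚ) :=
  fun x => x - (inner n x β - c) • β

/-- The shift `ρ = (-δ/2, -δ/2 - 1, …, -δ/2 - (n-1))`. -/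
def rho (n : ℕ) (δ : ℚ) : Fin n → ℚ := fun i => -δ/2 - (i : ℚ)

/-- The dot action `w.λ = w(λ + ρ) - ρ`. -/
def dot (n : ℕ) (δ : ℚ) (w : Function.End (Fin n → ℚ)) (x : Fin n → ℚ) : Fin n → ℚ :=
  w (x + rho n δ) - rho n δ

/-- The root system of type `D_n`: `±(ε_i - ε_j)`, `±(ε_i + ε_j)` for `i < j`. -/
def roots (n : ℕ) : Set (Fin n → ℚ) :=
  {β | ∃ i j : Fin n, i < j ∧ (β = eps n i - eps n j ∨ β = eps n i + eps n j ∨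
    β = -(eps n i - eps n j) ∨ β = -(eps n i + eps n j))}

/-- The Weyl group of type `D_n`, generated by the reflections in the roots.
(Since all generators are involutions, the monoid they generate is a group.) -/
def W (n : ℕ) : Submonoid (Function.End (Fin n → ℚ)) :=
  Submonoid.closure ((refl n) '' (roots n))

/-- The affine Weyl group `W_p` of type `D_n`, generated by `s_{β,rp}`, `β ∈ Φ`, `r ∈ ℤ`. -/
def Wp (n : ℕ) (p : ℕ) : Submonoid (Function.End (Fin n → ℚ)) :=
  Submonoid.closure {w | ∃ β ∈ roots n, ∃ r : ℤ, w = saff n β ((r : ℚ) * p)}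

/-- `μ` is in the `W`-dot-orbit of `λ` (integral weights, parameter `δ`). -/
def inOrbitW (n : ℕ) (δ : ℚ) (lam mu : Fin n → ℤ) : Prop :=
  ∃ w ∈ W n, (fun i => (mu i : ℚ)) = dot n δ w (fun i => (lam i : ℚ))

/-- `μ` is in the `W_p`-dot-orbit of `λ` (integral weights, parameter `δ`). -/
def inOrbitWp (n : ℕ) (p : ℕ) (δ : ℚ) (lam mu : Fin n → ℤ) : Prop :=
  ∃ w ∈ Wp n p, (fun i => (mu i : ℚ)) = dot n δ w (fun i => (lam i : ℚ))

end BrauerD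
namespace BrauerD

/-- A box of the Young diagram sits in row `x.1` (`Fin n`, 1-based row `x.1 + 1`) and
column `x.2 ≥ 1`.  Its content is `row - column = (x.1 + 1) - x.2`. -/
def boxContent (n : ℕ) (x : Fin n × ℕ) : ℤ := ((x.1 : ℤ) + 1) - (x.2 : ℤ)

/-- The boxes of the skew shape `λ/(λ ∩ μ)`: boxes of `λ` not in `λ ∩ μ` (componentwise
minimum). -/
def skew (n : ℕ) (lam mu : Fin n → ℕ) : Set (Fin n × ℕ) :=
  {x | 1 ≤ x.2 ∧ x.2 ≤ lam x.1 ∧ min (lam x.1) (mu x.1) < x.2}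

/-- The boxes of a set `S` can be paired up so that the contents of the two boxes of each
pair sum to `t`. -/
def PairedUp (n : ℕ) (S : Set (Fin n × ℕ)) (t : ℤ) : Prop :=
  ∃ f : Fin n × ℕ → Fin n × ℕ,
    ∀ x ∈ S, f x ∈ S ∧ f (f x) = x ∧ f x ≠ x ∧ boxContent n x + boxContent n (f x) = t

/-- The staircase configuration of Figure "exclude": in each of the `m` consecutive rows
`r+1, …, r+m` (0-based row indices `r, …, r+m-1`), the horizontally adjacent pair of
boxes of contents `(2-δ)/2` and `-δ/2`. -/
def staircase (n : ℕ) (δ : ℤ) (r m : ℕ) : Set (Fin n × ℕ) :=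
  {x | r ≤ (x.1 : ℕ) ∧ (x.1 : ℕ) < r + m ∧
    (2 * boxContent n x = -δ ∨ 2 * boxContent n x = 2 - δ)}

/-- The extra balance condition: if `δ` is even and the boxes of the skew shape `S` of
contents `-δ/2` and `(2-δ)/2` are configured as in Figure "exclude" (a staircase of
horizontal dominoes in `m` consecutive rows), then `m` must be even. -/
def StaircaseOK (n : ℕ) (δ : ℤ) (S : Set (Fin n × ℕ)) : Prop :=
  Even δ → ∀ r m : ℕ, 0 < m →
    {x ∈ S | 2 * boxContent n x = -δ ∨ 2 * boxContent n x = 2 - δ} = staircase n δ r m →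
    Even m

/-- `λ` and `μ` are `δ`-balanced: the boxes of `λ/(λ∩μ)`, and separately those of
`μ/(λ∩μ)`, can be paired so that the contents of each pair sum to `1-δ`, subject to the
extra staircase condition when `δ` is even. -/
def Balanced (n : ℕ) (δ : ℤ) (lam mu : Fin n → ℕ) : Prop :=
  PairedUp n (skew n lam mu) (1 - δ) ∧ PairedUp n (skew n mu lam) (1 - δ) ∧
  StaircaseOK n δ (skew n lam mu) ∧ StaircaseOK n δ (skew n mu lam)

end BrauerD

namespace BrauerD

section Aux

lemma lower_iff {n : ℕ} (P : Fin n → Prop) [DecidablePred P]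
    (hP : ∀ i j : Fin n, j ≤ i → P i → P j) (i : Fin n) :
    P i ↔ (i : ℕ) < (univ.filter P).card := by
  constructor
  · intro h
    have hsub : Finset.Iic i ⊆ univ.filter P := by
      intro j hj
      simp only [Finset.mem_Iic] at hj
      exact Finset.mem_filter.2 ⟨Finset.mem_univ _, hP i j hj h⟩
    have := Finset.card_le_card hsub
    rw [Fin.card_Iic] at this
    omega
  · intro h
    by_contra hne
    have hsub : univ.filter P ⊆ Finset.Iio i := by
      intro j hj
      rw [Finset.mem_filter] at hj
      rw [Finset.mem_Iio]
      by_contra hij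
      exact hne (hP j i (le_of_not_gt hij) hj.2)
    have := Finset.card_le_card hsub
    rw [Fin.card_Iio] at this
    omega


def IsSgnPerm (n : ℕ) (w : Function.End (Fin n → ℚ)) : Prop :=
  ∃ σ : Equiv.Perm (Fin n), ∃ ε : Fin n → ℚ,
    (∀ i, ε i = 1 ∨ ε i = -1) ∧ (∏ i, ε i = 1) ∧ ∀ x i, w x i = ε i * x (σ i)

lemma inner_eps (n : ℕ) (x : Fin n → ℚ) (i : Fin n) : inner n x (eps n i) = x i := by
  unfold inner eps; simp [mul_ite]

lemma inner_sub (n : ℕ) (x a b : Fin n → ℚ) : inner n x (a - b) = inner n x a - inner n x b := by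
  unfold inner; simp [mul_sub, Finset.sum_sub_distrib]

lemma inner_add (n : ℕ) (x a b : Fin n → ℚ) : inner n x (a + b) = inner n x a + inner n x b := by
  unfold inner; simp [mul_add, Finset.sum_add_distrib]

lemma inner_neg (n : ℕ) (x b : Fin n → ℚ) : inner n x (-b) = - inner n x b := by
  unfold inner; simp

lemma refl_neg (n : ℕ) (b : Fin n → ℚ) : refl n (-b) = refl n b := by
  funext x; unfold refl; rw [inner_neg]; simp

lemma refl_apply (n : ℕ) (b : Fin n → ℚ) (x : Fin n → ℚ) (k : Fin n) :
    refl n b x k = x k - inner n x b * b k := rfl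

lemma isSgnPerm_sub (n : ℕ) (i j : Fin n) (hne : i ≠ j) :
    IsSgnPerm n (refl n (eps n i - eps n j)) := by
  refine ⟨Equiv.swap i j, fun _ => 1, fun _ => Or.inl rfl, by simp, ?_⟩
  intro x k
  rw [refl_apply, inner_sub, inner_eps, inner_eps]
  rcases eq_or_ne k i with rfl | hki
  · simp [Pi.sub_apply, eps, hne, Equiv.swap_apply_left]
  · rcases eq_or_ne k j with rfl | hkj
    · simp [Pi.sub_apply, eps, hne.symm, hki, Equiv.swap_apply_right]
    · simp [Pi.sub_apply, eps, hki, hkj, Equiv.swap_apply_of_ne_of_ne hki hkj]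

lemma isSgnPerm_add (n : ℕ) (i j : Fin n) (hne : i ≠ j) :
    IsSgnPerm n (refl n (eps n i + eps n j)) := by
  classical
  refine ⟨Equiv.swap i j, fun k => if k = i ∨ k = j then -1 else 1, ?_, ?_, ?_⟩
  · intro k
    by_cases h : k = i ∨ k = j <;> simp [h]
  · have h1 : ∀ k ∈ (univ : Finset (Fin n)), k ∉ ({i, j} : Finset (Fin n)) →
        (if k = i ∨ k = j then (-1 : ℚ) else 1) = 1 := by
      intro k _ hk
      simp only [Finset.mem_insert, Finset.mem_singleton] at hk
      simp [not_or.1 hk]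
    rw [← Finset.prod_subset (Finset.subset_univ ({i, j} : Finset (Fin n))) h1,
      Finset.prod_pair hne]
    norm_num
  · intro x k
    rw [refl_apply, inner_add, inner_eps, inner_eps]
    rcases eq_or_ne k i with rfl | hki
    · simp [Pi.add_apply, eps, hne, Equiv.swap_apply_left]
    · rcases eq_or_ne k j with rfl | hkj
      · simp [Pi.add_apply, eps, hne.symm, hki, Equiv.swap_apply_right]
      · simp [Pi.add_apply, eps, hki, hkj, Equiv.swap_apply_of_ne_of_ne hki hkj]

lemma isSgnPerm_of_mem_W (n : ℕ) (w : Function.End (Fin n → ℚ)) (hw : w ∈ W n) :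
    IsSgnPerm n w := by
  induction hw using Submonoid.closure_induction with
  | mem w hw =>
    obtain ⟨β, hβ, rfl⟩ := hw
    obtain ⟨i, j, hij, hc⟩ := hβ
    have hne : i ≠ j := ne_of_lt hij
    rcases hc with rfl | rfl | rfl | rfl
    · exact isSgnPerm_sub n i j hne
    · exact isSgnPerm_add n i j hne
    · rw [refl_neg]; exact isSgnPerm_sub n i j hne
    · rw [refl_neg]; exact isSgnPerm_add n i j hne
  | one =>
    exact ⟨1, fun _ => 1, fun _ => Or.inl rfl, by simp, fun x i => by simp; rfl⟩
  | mul w w' hwmem hw'mem ih ih' =>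
    obtain ⟨σ, ε, hε, hprod, hact⟩ := ih
    obtain ⟨σ', ε', hε', hprod', hact'⟩ := ih'
    refine ⟨σ.trans σ', fun i => ε i * ε' (σ i), ?_, ?_, ?_⟩
    · intro i
      rcases hε i with h | h <;> rcases hε' (σ i) with h' | h' <;> simp [h, h']
    · rw [Finset.prod_mul_distrib, hprod, Equiv.prod_comp σ (fun k => ε' k), hprod']
      norm_num
    · intro x i
      have : (w * w') x = w (w' x) := rfl
      rw [this, hact, hact']
      ring_nf
      rfl


lemma valB {n : ℕ} (A B : Fin n → ℤ) (σ : Equiv.Perm (Fin n)) (η : Fin n → ℤ)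
    (hη : ∀ i, η i = 1 ∨ η i = -1) (hB : ∀ i, B i = η i * A (σ i))
    (s : ℤ) (hsA : ∀ i, A i ≠ s ∧ A i ≠ -s) : ∀ i, B i ≠ s ∧ B i ≠ -s := by
  intro i
  have h1 := hsA (σ i)
  have h2 := hB i
  rcases hη i with h | h <;> rw [h] at h2 <;> constructor <;> omega

lemma count_shift_aux {n : ℕ} (A B : Fin n → ℤ) (σ : Equiv.Perm (Fin n)) (η : Fin n → ℤ)
    (hη : ∀ i, η i = 1 ∨ η i = -1) (hB : ∀ i, B i = η i * A (σ i)) (s : ℤ) :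
    (univ.filter (fun i => s < B i ∨ B i < -s)).card
      = (univ.filter (fun i => s < A i ∨ A i < -s)).card := by
  apply Finset.card_bij' (fun a _ => σ a) (fun a _ => σ.symm a)
  · intro a ha
    rw [Finset.mem_filter] at ha ⊢
    refine ⟨Finset.mem_univ _, ?_⟩
    have h2 := hB a
    rcases hη a with h | h <;> rw [h] at h2 <;> omega
  · intro a ha
    rw [Finset.mem_filter] at ha ⊢
    refine ⟨Finset.mem_univ _, ?_⟩
    have h2 := hB (σ.symm a)
    rw [Equiv.apply_symm_apply] at h2
    rcases hη (σ.symm a) with h | h <;> rw [h] at h2 <;> omega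
  · intro a _; exact Equiv.symm_apply_apply σ a
  · intro a _; exact Equiv.apply_symm_apply σ a

lemma compl_count {n : ℕ} (A : Fin n → ℤ) (s : ℤ) (hs : ∀ i, A i ≠ s) :
    (univ.filter (fun i => A i < s)).card = n - (univ.filter (fun i => s < A i)).card := by
  have h : univ.filter (fun i => A i < s) = (univ.filter (fun i => s < A i))ᶜ := by
    ext i
    simp only [Finset.mem_filter, Finset.mem_compl, Finset.mem_univ, true_and]
    have := hs i
    omega
  rw [h, Finset.card_compl, Fintype.card_fin]

lemma count_shift {n : ℕ} (A B : Fin n → ℤ) (σ : Equiv.Perm (Fin n)) (η : Fin n → ℤ)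
    (hη : ∀ i, η i = 1 ∨ η i = -1) (hB : ∀ i, B i = η i * A (σ i))
    (s : ℤ) (hsA : ∀ i, A i ≠ s ∧ A i ≠ -s) :
    (univ.filter (fun i => s < A i)).card + (univ.filter (fun i => -s < B i)).card
      = (univ.filter (fun i => s < B i)).card + (univ.filter (fun i => -s < A i)).card := by
  have hsB := valB A B σ η hη hB s hsA
  -- reduce to the case 0 ≤ s
  rcases le_total 0 s with hs0 | hs0
  case _ =>
    have key := count_shift_aux A B σ η hη hB s
    have hsplit : ∀ (C : Fin n → ℤ), (∀ i, C i ≠ s ∧ C i ≠ -s) →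
        (univ.filter (fun i => s < C i ∨ C i < -s)).card
          = (univ.filter (fun i => s < C i)).card + (n - (univ.filter (fun i => -s < C i)).card) := by
      intro C hC
      rw [Finset.filter_or, Finset.card_union_of_disjoint, compl_count C (-s) (fun i => (hC i).2)]
      rw [Finset.disjoint_left]
      intro a ha hb
      rw [Finset.mem_filter] at ha hb
      omega
    have e1 := hsplit A hsA
    have e2 := hsplit B hsB
    have c1 : (univ.filter (fun i => -s < A i)).card ≤ n := by
      calc _ ≤ (univ : Finset (Fin n)).card := Finset.card_filter_le _ _
      _ = n := by simp
    have c2 : (univ.filter (fun i => -s < B i)).card ≤ n := by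
      calc _ ≤ (univ : Finset (Fin n)).card := Finset.card_filter_le _ _
      _ = n := by simp
    omega
  case _ =>
    have key := count_shift_aux A B σ η hη hB (-s)
    rw [neg_neg] at key
    have hsplit : ∀ (C : Fin n → ℤ), (∀ i, C i ≠ s ∧ C i ≠ -s) →
        (univ.filter (fun i => -s < C i ∨ C i < s)).card
          = (univ.filter (fun i => -s < C i)).card + (n - (univ.filter (fun i => s < C i)).card) := by
      intro C hC
      rw [Finset.filter_or, Finset.card_union_of_disjoint, compl_count C s (fun i => (hC i).1)]
      rw [Finset.disjoint_left]
      intro a ha hb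
      rw [Finset.mem_filter] at ha hb
      omega
    have e1 := hsplit A hsA
    have e2 := hsplit B hsB
    have c1 : (univ.filter (fun i => s < A i)).card ≤ n := by
      calc _ ≤ (univ : Finset (Fin n)).card := Finset.card_filter_le _ _
      _ = n := by simp
    have c2 : (univ.filter (fun i => s < B i)).card ≤ n := by
      calc _ ≤ (univ : Finset (Fin n)).card := Finset.card_filter_le _ _
      _ = n := by simp
    omega


lemma count_zero_parity {n : ℕ} (A B : Fin n → ℤ) (σ : Equiv.Perm (Fin n)) (η : Fin n → ℤ)
    (hη : ∀ i, η i = 1 ∨ η i = -1) (hprod : ∏ i, η i = 1)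
    (hB : ∀ i, B i = η i * A (σ i)) (h0 : ∀ i, A i ≠ 0) :
    Even ((univ.filter fun i => 0 < A i).card + (univ.filter fun i => 0 < B i).card) := by
  classical
  set P : Finset (Fin n) := univ.filter (fun i => 0 < A (σ i)) with hP
  set Q : Finset (Fin n) := univ.filter (fun i => η i = -1) with hQ
  have hPcard : P.card = (univ.filter fun i => 0 < A i).card := by
    apply Finset.card_bij' (fun a _ => σ a) (fun a _ => σ.symm a)
    · intro a ha
      rw [Finset.mem_filter] at ha ⊢
      exact ⟨Finset.mem_univ _, ha.2⟩
    · intro a ha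
      rw [Finset.mem_filter] at ha ⊢
      refine ⟨Finset.mem_univ _, ?_⟩
      rw [Equiv.apply_symm_apply]
      exact ha.2
    · intro a _; exact Equiv.symm_apply_apply σ a
    · intro a _; exact Equiv.apply_symm_apply σ a
  have hQeven : Even Q.card := by
    have h1 : (∏ i ∈ Q, η i) * ∏ i ∈ Qᶜ, η i = ∏ i, η i := Finset.prod_mul_prod_compl Q η
    have h2 : ∏ i ∈ Q, η i = (-1) ^ Q.card := by
      rw [Finset.prod_congr rfl (fun i hi => (Finset.mem_filter.1 hi).2), Finset.prod_const]
    have h3 : ∏ i ∈ Qᶜ, η i = 1 := by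
      rw [Finset.prod_congr rfl (fun i hi => ?_), Finset.prod_const, one_pow]
      rw [Finset.mem_compl, hQ, Finset.mem_filter] at hi
      rcases hη i with h | h
      · exact h
      · exact absurd ⟨Finset.mem_univ _, h⟩ hi
    rw [h2, h3, mul_one, hprod] at h1
    exact (neg_one_pow_eq_one_iff_even (by decide : (-1 : ℤ) ≠ 1)).1 h1
  have hsplit : univ.filter (fun i => 0 < B i) = (P \ Q) ∪ (Q \ P) := by
    ext i
    simp only [Finset.mem_filter, Finset.mem_union, Finset.mem_sdiff, Finset.mem_univ, true_and,
      hP, hQ]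
    have hA0 := h0 (σ i)
    have h2 := hB i
    rcases hη i with h | h <;> rw [h] at h2 <;> simp [h, h2] <;> omega
  have hd : Disjoint (P \ Q) (Q \ P) := by
    rw [Finset.disjoint_left]
    intro a ha hb
    rw [Finset.mem_sdiff] at ha hb
    exact hb.2 ha.1
  have e1 : (univ.filter fun i => 0 < B i).card = (P \ Q).card + (Q \ P).card := by
    rw [hsplit, Finset.card_union_of_disjoint hd]
  have e2 : (P \ Q).card + (P ∩ Q).card = P.card := Finset.card_sdiff_add_card_inter P Q
  have e3 : (Q \ P).card + (Q ∩ P).card = Q.card := Finset.card_sdiff_add_card_inter Q P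
  have e4 : (P ∩ Q).card = (Q ∩ P).card := by rw [Finset.inter_comm]
  obtain ⟨k, hk⟩ := hQeven
  refine ⟨(P \ Q).card + k, by omega⟩


lemma orbit_data (n : ℕ) (δ : ℤ) (lam mu : Fin n → ℕ)
    (horb : inOrbitW n (δ : ℚ) (fun i => (lam i : ℤ)) (fun i => (mu i : ℤ))) :
    ∃ σ : Equiv.Perm (Fin n), ∃ η : Fin n → ℤ, (∀ i, η i = 1 ∨ η i = -1) ∧ (∏ i, η i = 1) ∧
      ∀ i, 2*(mu i : ℤ) - δ - 2*((i : ℕ) : ℤ)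
          = η i * (2*(lam (σ i) : ℤ) - δ - 2*(((σ i) : ℕ) : ℤ)) := by
  obtain ⟨w, hw, heq⟩ := horb
  obtain ⟨σ, ε, hε, hprod, hact⟩ := isSgnPerm_of_mem_W n w hw
  have h1 : ∀ i, (mu i : ℚ) + rho n (δ : ℚ) i
      = ε i * ((lam (σ i) : ℚ) + rho n (δ : ℚ) (σ i)) := by
    intro i
    have h2 := congrFun heq i
    simp only [dot, Pi.sub_apply] at h2
    rw [hact] at h2
    simp only [Pi.add_apply] at h2
    push_cast at h2 ⊢
    linarith
  classical
  have key : ∀ i, (((if ε i = 1 then (1 : ℤ) else -1) : ℤ) : ℚ) = ε i := by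
    intro i
    rcases hε i with h | h <;> simp [h] <;> norm_num
  refine ⟨σ, fun i => if ε i = 1 then 1 else -1, ?_, ?_, ?_⟩
  · intro i
    rcases hε i with h | h
    · left; simp [h]
    · right; simp [h]; norm_num
  · have h2 : ((∏ i, (if ε i = 1 then (1 : ℤ) else -1) : ℤ) : ℚ) = 1 := by
      rw [Int.cast_prod, Finset.prod_congr rfl (fun i _ => key i)]
      exact hprod
    exact_mod_cast h2
  · intro i
    have h3 : ((2*(mu i : ℤ) - δ - 2*((i : ℕ) : ℤ) : ℤ) : ℚ)
        = (((if ε i = 1 then (1:ℤ) else -1) : ℤ) : ℚ)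
          * ((2*(lam (σ i) : ℤ) - δ - 2*(((σ i) : ℕ) : ℤ) : ℤ) : ℚ) := by
      have h4 := h1 i
      rw [key i]
      simp only [rho] at h4
      push_cast
      linarith [h4]
    exact_mod_cast h3


lemma paired_aux (n : ℕ) (δ : ℤ) (lam mu : Fin n → ℕ) (hlam : Antitone lam) (hmu : Antitone mu)
    (σ : Equiv.Perm (Fin n)) (η : Fin n → ℤ) (hη : ∀ i, η i = 1 ∨ η i = -1)
    (hprod : ∏ i, η i = 1)
    (hBh : ∀ i, 2*(mu i : ℤ) - δ - 2*((i : ℕ) : ℤ)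
        = η i * (2*(lam (σ i) : ℤ) - δ - 2*(((σ i) : ℕ) : ℤ))) :
    PairedUp n (skew n lam mu) (1 - δ) := by
  classical
  set A : Fin n → ℤ := fun i => 2*(lam i : ℤ) - δ - 2*((i : ℕ) : ℤ) with hAdef
  set B : Fin n → ℤ := fun i => 2*(mu i : ℤ) - δ - 2*((i : ℕ) : ℤ) with hBdef
  have hB : ∀ i, B i = η i * A (σ i) := fun i => hBh i
  set qA : ℤ → ℕ := fun s => (univ.filter (fun j => s < A j)).card with hqA
  set qB : ℤ → ℕ := fun s => (univ.filter (fun j => s < B j)).card with hqB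
  have hthA : ∀ (s : ℤ) (i : Fin n), s < A i ↔ (i : ℕ) < qA s := by
    intro s i
    refine lower_iff _ (fun i j hji h => lt_of_lt_of_le h ?_) i
    have h1 : lam i ≤ lam j := hlam hji
    have h2 : (j : ℕ) ≤ (i : ℕ) := hji
    simp only [hAdef]
    omega
  have hthB : ∀ (s : ℤ) (i : Fin n), s < B i ↔ (i : ℕ) < qB s := by
    intro s i
    refine lower_iff _ (fun i j hji h => lt_of_lt_of_le h ?_) i
    have h1 : mu i ≤ mu j := hmu hji
    have h2 : (j : ℕ) ≤ (i : ℕ) := hji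
    simp only [hBdef]
    omega
  have hval : ∀ s : ℤ, s % 2 ≠ δ % 2 → ∀ i, A i ≠ s ∧ A i ≠ -s := by
    intro s hs i
    simp only [hAdef]
    omega
  have hqAle : ∀ s, qA s ≤ n := by
    intro s
    calc qA s ≤ (univ : Finset (Fin n)).card := Finset.card_filter_le _ _
    _ = n := by simp
  have hDisp : ∀ s : ℤ, (∀ i, A i ≠ s ∧ A i ≠ -s) →
      qA s + qB (-s) = qB s + qA (-s) :=
    fun s hs => count_shift A B σ η hη hB s hs
  set f : Fin n × ℕ → Fin n × ℕ := fun x =>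
    (⟨(qA (-(2*(x.2 : ℤ) - 2*((x.1 : ℕ) : ℤ) - 1 - δ)) - 1
        - ((x.1 : ℕ) - qB (2*(x.2 : ℤ) - 2*((x.1 : ℕ) : ℤ) - 1 - δ))) % n,
      Nat.mod_lt _ x.1.pos⟩,
     (((x.1 : ℕ) : ℤ)
        + ((qA (-(2*(x.2 : ℤ) - 2*((x.1 : ℕ) : ℤ) - 1 - δ)) - 1
        - ((x.1 : ℕ) - qB (2*(x.2 : ℤ) - 2*((x.1 : ℕ) : ℤ) - 1 - δ)) : ℕ) : ℤ)
        + 1 + δ - (x.2 : ℤ)).toNat)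
    with hf
  refine ⟨f, ?_⟩
  have main : ∀ x ∈ skew n lam mu,
      f x ∈ skew n lam mu ∧
      ((f x).1 : ℕ) = qA (-(2*(x.2 : ℤ) - 2*((x.1 : ℕ) : ℤ) - 1 - δ)) - 1
          - ((x.1 : ℕ) - qB (2*(x.2 : ℤ) - 2*((x.1 : ℕ) : ℤ) - 1 - δ)) ∧
      ((f x).2 : ℤ) = ((x.1 : ℕ) : ℤ) + (((f x).1 : ℕ) : ℤ) + 1 + δ - (x.2 : ℤ) ∧
      (qB (2*(x.2 : ℤ) - 2*((x.1 : ℕ) : ℤ) - 1 - δ) ≤ (x.1 : ℕ) ∧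
       (x.1 : ℕ) < qA (2*(x.2 : ℤ) - 2*((x.1 : ℕ) : ℤ) - 1 - δ) ∧
       qA (2*(x.2 : ℤ) - 2*((x.1 : ℕ) : ℤ) - 1 - δ)
          + qB (-(2*(x.2 : ℤ) - 2*((x.1 : ℕ) : ℤ) - 1 - δ))
        = qB (2*(x.2 : ℤ) - 2*((x.1 : ℕ) : ℤ) - 1 - δ)
          + qA (-(2*(x.2 : ℤ) - 2*((x.1 : ℕ) : ℤ) - 1 - δ))) := by
    rintro ⟨i, c⟩ hx
    have hx2 : mu i < c ∧ c ≤ lam i := by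
      obtain ⟨h1, h2, h3⟩ := hx
      simp only at h1 h2 h3 ⊢
      omega
    set s : ℤ := 2*(c : ℤ) - 2*((i : ℕ) : ℤ) - 1 - δ with hs
    have hpar : s % 2 ≠ δ % 2 := by omega
    have hvs := hval s hpar
    have hvsB := valB A B σ η hη hB s hvs
    have hABi : B i < s ∧ s < A i := by
      simp only [hAdef, hBdef]
      omega
    have hhigh : (i : ℕ) < qA s := (hthA s i).1 hABi.2
    have hlow : qB s ≤ (i : ℕ) := by
      have hnot : ¬ (s < B i) := by omega
      have := (hthB s i).not.1 hnot
      omega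
    have hD := hDisp s hvs
    have hy1 : ((f (i, c)).1 : ℕ) = (qA (-s) - 1 - ((i : ℕ) - qB s)) % n := rfl
    have hy2 : ((f (i, c)).2 : ℕ)
        = (((i : ℕ) : ℤ) + ((qA (-s) - 1 - ((i : ℕ) - qB s) : ℕ) : ℤ) + 1 + δ - (c : ℤ)).toNat :=
      rfl
    have hb2 : qA (-s) - 1 - ((i : ℕ) - qB s) < qA (-s) := by omega
    have hi'n : qA (-s) - 1 - ((i : ℕ) - qB s) < n := lt_of_lt_of_le hb2 (hqAle _)
    have hI : ((f (i, c)).1 : ℕ) = qA (-s) - 1 - ((i : ℕ) - qB s) := by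
      rw [hy1, Nat.mod_eq_of_lt hi'n]
    have hIq : qB (-s) ≤ ((f (i, c)).1 : ℕ) ∧ ((f (i, c)).1 : ℕ) < qA (-s) := by
      rw [hI]; omega
    have hsA' : -s < A (f (i, c)).1 := (hthA (-s) _).2 hIq.2
    have hsB' : B (f (i, c)).1 < -s := by
      have hnot : ¬ (-s < B (f (i, c)).1) := by
        intro hc2
        have := (hthB (-s) _).1 hc2
        omega
      have h2 := (hvsB (f (i, c)).1).2
      omega
    have hAI : -s < 2*(lam (f (i, c)).1 : ℤ) - δ - 2*(((f (i, c)).1 : ℕ) : ℤ) := by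
      simpa only [hAdef] using hsA'
    have hBI : 2*(mu (f (i, c)).1 : ℤ) - δ - 2*(((f (i, c)).1 : ℕ) : ℤ) < -s := by
      simpa only [hBdef] using hsB'
    have hnn : (0 : ℤ) ≤ ((i : ℕ) : ℤ) + ((qA (-s) - 1 - ((i : ℕ) - qB s) : ℕ) : ℤ)
        + 1 + δ - (c : ℤ) := by
      rw [← hI]
      omega
    have hc' : ((f (i, c)).2 : ℤ)
        = ((i : ℕ) : ℤ) + (((f (i, c)).1 : ℕ) : ℤ) + 1 + δ - (c : ℤ) := by
      rw [hy2, Int.toNat_of_nonneg hnn, hI]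
    have hmem : ∀ y : Fin n × ℕ, mu y.1 < y.2 → y.2 ≤ lam y.1 → y ∈ skew n lam mu := by
      intro y h1 h2
      exact ⟨by omega, by omega, by omega⟩
    refine ⟨hmem (f (i, c)) (by omega) (by omega), hI, hc', hlow, hhigh, hD⟩
  clear_value A B qA qB f
  intro x hx
  obtain ⟨m1, m2, m3, mb1, mb2, mb3⟩ := main x hx
  obtain ⟨m1', m2', m3', mb1', mb2', mb3'⟩ := main (f x) m1
  have hneg : (2*((f x).2 : ℤ) - 2*(((f x).1 : ℕ) : ℤ) - 1 - δ)
      = -(2*(x.2 : ℤ) - 2*((x.1 : ℕ) : ℤ) - 1 - δ) := by omega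
  rw [hneg] at m2' mb1' mb2' mb3'
  rw [neg_neg] at m2' mb3'
  refine ⟨m1, ?_, ?_, ?_⟩
  · -- f (f x) = x
    have h1 : ((f (f x)).1 : ℕ) = (x.1 : ℕ) := by omega
    have h2 : (f (f x)).2 = x.2 := by omega
    exact Prod.ext (Fin.ext h1) h2
  · -- f x ≠ x
    intro heq
    have e1 : ((f x).1 : ℕ) = (x.1 : ℕ) := by rw [heq]
    have e2 : (f x).2 = x.2 := by rw [heq]
    have hzero : (2*(x.2 : ℤ) - 2*((x.1 : ℕ) : ℤ) - 1 - δ) = 0 := by omega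
    rw [hzero] at m2 mb1 mb2 mb3
    rw [neg_zero] at m2 mb3
    have hodd : (0 : ℤ) % 2 ≠ δ % 2 := by omega
    have h0 : ∀ i, A i ≠ 0 := fun i => by
      have := hval 0 hodd i
      omega
    have hE : Even (qA 0 + qB 0) := by
      have := count_zero_parity A B σ η hη hprod hB h0
      simpa [hqA, hqB] using this
    obtain ⟨k, hk⟩ := hE
    omega
  · -- content sum
    simp only [boxContent]
    omega


end Aux

end BrauerD

/-- if partitions `λ, μ` lie in the same dot-orbit of the type `D_n` Weyl
group, then the contents occurring in `λ/(λ∩μ)` and those occurring in `μ/(λ∩μ)` are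
disjoint, and within each skew shape the boxes can be paired so that the contents of
each pair sum to `1 - δ`. -/
theorem BrauerD.orbit_implies_disjoint_and_paired (n : ℕ) (δ : ℤ) (lam mu : Fin n → ℕ)
    (hlam : Antitone lam) (hmu : Antitone mu)
    (horb : BrauerD.inOrbitW n (δ : ℚ) (fun i => (lam i : ℤ)) (fun i => (mu i : ℤ))) :
    (∀ x ∈ BrauerD.skew n lam mu, ∀ y ∈ BrauerD.skew n mu lam,
      BrauerD.boxContent n x ≠ BrauerD.boxContent n y) ∧
    BrauerD.PairedUp n (BrauerD.skew n lam mu) (1 - δ) ∧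
    BrauerD.PairedUp n (BrauerD.skew n mu lam) (1 - δ) := by
  classical
  obtain ⟨σ, η, hη, hprod, hB⟩ := BrauerD.orbit_data n δ lam mu horb
  refine ⟨?_, ?_, ?_⟩
  · rintro ⟨i, c⟩ hx ⟨j, d⟩ hy hcon
    obtain ⟨hx1, hx2, hx3⟩ := hx
    obtain ⟨hy1, hy2, hy3⟩ := hy
    simp only at hx1 hx2 hx3 hy1 hy2 hy3
    simp only [BrauerD.boxContent] at hcon
    rcases le_total i j with hij | hij
    · have h1 : mu j ≤ mu i := hmu hij
      have h2 : (i : ℕ) ≤ (j : ℕ) := hij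
      omega
    · have h1 : lam i ≤ lam j := hlam hij
      have h2 : (j : ℕ) ≤ (i : ℕ) := hij
      omega
  · exact BrauerD.paired_aux n δ lam mu hlam hmu σ η hη hprod hB
  · refine BrauerD.paired_aux n δ mu lam hmu hlam σ.symm (fun j => η (σ.symm j))
      (fun j => hη _) ((Equiv.prod_comp σ.symm η).trans hprod) ?_
    intro j
    have h := hB (σ.symm j)
    rw [Equiv.apply_symm_apply] at h
    rcases hη (σ.symm j) with h2 | h2 <;> rw [h2] at h <;> simp only [h2] <;> omega
end

section
/- Let $\lambda$ and $\mu$ be two partitions. If a box $\epsilon$ of $\lambda/(\lambda\cap\mu)$ and a box $\eta$ of $\mu/(\lambda\cap\mu)$ have the same content, a contradiction results; hence the sets of contents of boxes of $\lambda/(\lambda\cap\mu)$ and of $\mu/(\lambda\cap\mu)$ are disjoint. -/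
open Finset

/-- for partitions `λ, μ`, no box of `λ/(λ∩μ)` has the same content as a
box of `μ/(λ∩μ)`: the sets of contents of the two skew shapes are disjoint. -/
theorem BrauerD.skew_contents_disjoint (n : ℕ) (lam mu : Fin n → ℕ)
    (hlam : Antitone lam) (hmu : Antitone mu) :
    ∀ x ∈ BrauerD.skew n lam mu, ∀ y ∈ BrauerD.skew n mu lam,
      BrauerD.boxContent n x ≠ BrauerD.boxContent n y := by
  rintro ⟨a, b⟩ ⟨hb1, hb2, hb3⟩ ⟨c, d⟩ ⟨hd1, hd2, hd3⟩ h
  simp only [BrauerD.boxContent, BrauerD.skew] at *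
  rcases le_total a c with hac | hca
  · have h1 : mu c ≤ mu a := hmu hac
    have h2 : (a : ℕ) ≤ (c : ℕ) := hac
    omega
  · have h1 : lam a ≤ lam c := hlam hca
    have h2 : (c : ℕ) ≤ (a : ℕ) := hca
    omega
end
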